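/- Let N ≥ 1, let c ∈ h^{1/2}, set A := Γ_cΓ_c*, and assume that the vectors Ac, A²c, …, A^N c are linearly independent in ℓ²(ℕ,ℂ). Let G be the N×N matrix with entries G_{k,ℓ} = ⟨A^{k+ℓ} c, c⟩ for 0 ≤ k, ℓ ≤ N−1, and let B be the N×N matrix obtained from G by replacing its last column (the column ℓ = N−1) by the column (⟨A^{k+N} c, c⟩)_{0≤k≤N−1}. Then det G ≠ 0 and Σ_{n≥0} (n+1)|c_n|² ≥ det B / det G (the left-hand side being the trace of Γ_cΓ_c*), with equality if and only if Γ_c has rank N. -/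

import Mathlib

open scoped InnerProductSpace ComplexConjugate ENNReal

noncomputable section

/-- The Hilbert space `ℓ²(ℕ, ℂ)`. -/
abbrev L2 : Type := lp (fun _ : ℕ => ℂ) 2

/-- Membership in the space `h^{1/2}`: `c ∈ ℓ²` and `Σ n |c_n|² < ∞`. -/
def InH12 (c : ℕ → ℂ) : Prop :=
  Memℓp c 2 ∧ Summable (fun n : ℕ => (n : ℝ) * ‖c n‖ ^ 2)

/-- `Γ` is the Hankel operator of symbol `c`: `(Γ x)_n = Σ_p c_{n+p} x_p`. -/
def IsHankelOp (c : ℕ → ℂ) (Γ : L2 →L[ℂ] L2) : Prop :=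
  ∀ x : L2, ∀ n : ℕ, (Γ x : ℕ → ℂ) n = ∑' p : ℕ, c (n + p) * (x : ℕ → ℂ) p

/-- The shifted sequence `c̃ : n ↦ c_{n+1}`. -/
def shiftSeq (c : ℕ → ℂ) : ℕ → ℂ := fun n => c (n + 1)

/-- The operator `Γ Γ*`. -/
def opT (Γ : L2 →L[ℂ] L2) : L2 →L[ℂ] L2 :=
  Γ ∘L ContinuousLinearMap.adjoint Γ

/-- `e₀ = (1,0,0,…) ∈ ℓ²`. -/
def e0 : L2 := lp.single 2 0 1

/-- Generic min–max value `a_j` (for `j ≥ 1`) of a bounded operator `T` on a Hilbert space: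
the infimum over subspaces `F` of dimension at most `j-1` of the supremum of `Re ⟨T h, h⟩`
over unit vectors `h` orthogonal to `F`. -/
def minmaxVal {H : Type*} [NormedAddCommGroup H] [InnerProductSpace ℂ H]
    (T : H →L[ℂ] H) (j : ℕ) : ℝ :=
  ⨅ F : {F : Submodule ℂ H // Module.finrank ℂ F ≤ j - 1},
    ⨆ h : {h : H // ‖h‖ = 1 ∧ ∀ y ∈ F.1, ⟪y, h⟫_ℂ = 0},
      (⟪T h.1, h.1⟫_ℂ).re

/-- `λ_j(Γ)²` (for `j ≥ 1`): the `j`-th min–max value of `Γ Γ*`. -/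
def svalSq (Γ : L2 →L[ℂ] L2) (j : ℕ) : ℝ := minmaxVal (opT Γ) j

lemma summable_sq_of_memℓp {f : ℕ → ℂ} (hf : Memℓp f 2) :
    Summable fun n : ℕ => ‖f n‖ ^ 2 := by
  have h := hf.summable (p := 2) (by norm_num)
  have h2 : ((2 : ℝ≥0∞).toReal) = ((2 : ℕ) : ℝ) := by norm_num
  rw [h2] at h
  simpa [Real.rpow_natCast] using h

/-- The weighted sequence `n ↦ √(1+n) · c_n`, whose `ℓ²` norm is the `h^{1/2}` norm of `c`. -/
def wSeq (c : ℕ → ℂ) : ℕ → ℂ := fun n => (Real.sqrt (1 + (n : ℝ)) : ℂ) * c n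

lemma memℓp_wSeq {c : ℕ → ℂ} (hc : InH12 c) : Memℓp (wSeq c) 2 := by
  apply memℓp_gen
  have h2 : ((2 : ℝ≥0∞).toReal) = ((2 : ℕ) : ℝ) := by norm_num
  rw [h2]
  have hs : Summable fun n : ℕ => (1 + (n : ℝ)) * ‖c n‖ ^ 2 := by
    have := (summable_sq_of_memℓp hc.1).add hc.2
    convert this using 2 with n
    ring
  have key : ∀ n : ℕ, ‖wSeq c n‖ ^ ((2 : ℕ) : ℝ) = (1 + (n : ℝ)) * ‖c n‖ ^ 2 := by
    intro n
    rw [Real.rpow_natCast]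
    have h1 : (0 : ℝ) ≤ 1 + (n : ℝ) := by positivity
    simp only [wSeq, norm_mul, Complex.norm_real, Real.norm_eq_abs,
      abs_of_nonneg (Real.sqrt_nonneg _)]
    rw [mul_pow, Real.sq_sqrt h1]
  exact (summable_congr fun n => key n).mpr hs

/-- The space `h^{1/2}` as a type. -/
def H12 : Type := {c : ℕ → ℂ // InH12 c}

/-- The isometric embedding of `h^{1/2}` into `ℓ²` given by `c ↦ (√(1+n) c_n)_n`;
the `h^{1/2}` norm of `c` is the `ℓ²` norm of its image. -/
def H12.toL2 (c : H12) : L2 := ⟨wSeq c.1, memℓp_wSeq c.2⟩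

lemma H12.toL2_injective : Function.Injective H12.toL2 := by
  intro c d h
  apply Subtype.ext
  funext n
  have h' : wSeq c.1 n = wSeq d.1 n := congrFun (congrArg Subtype.val h) n
  have hs : (Real.sqrt (1 + (n : ℝ)) : ℂ) ≠ 0 := by
    simp only [ne_eq, Complex.ofReal_eq_zero]
    positivity
  exact mul_left_cancel₀ hs h'

/-- The metric (hence the topology) on `h^{1/2}` induced by the `h^{1/2}` norm
`(Σ (1+n)|c_n|²)^{1/2}`, obtained from the isometric embedding into `ℓ²`. -/
instance : MetricSpace H12 := MetricSpace.induced H12.toL2 H12.toL2_injective inferInstance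

/-- The Gram matrix `G_{k,ℓ} = ⟨A^{k+ℓ} v, v⟩`, `0 ≤ k, ℓ ≤ N-1`. -/
def gramG (A : L2 →L[ℂ] L2) (v : L2) (N : ℕ) : Matrix (Fin N) (Fin N) ℂ :=
  fun k l => ⟪v, (A ^ ((k : ℕ) + (l : ℕ))) v⟫_ℂ

/-- The matrix `B`: the Gram matrix `G` with its last column replaced by
`(⟨A^{k+N} v, v⟩)_{0 ≤ k ≤ N-1}`. -/
def gramB (A : L2 →L[ℂ] L2) (v : L2) (N : ℕ) : Matrix (Fin N) (Fin N) ℂ :=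
  fun k l => if (l : ℕ) = N - 1 then ⟪v, (A ^ ((k : ℕ) + N)) v⟫_ℂ
    else ⟪v, (A ^ ((k : ℕ) + (l : ℕ))) v⟫_ℂ

/-!
Write `A = Γ Γ*`, `v = c`, and let `K` be the span of the Krylov vectors `v, Av, …, A^{N-1} v`;
the independence hypothesis makes them a basis of `K`, whose Gram matrix is `G`, so `det G ≠ 0`.
Since `A` shifts each Krylov vector to the next, the compression `P_K A|_K` has a companion
matrix in this basis; its only possibly nonzero diagonal entry is the last coordinate of
`P_K A^N v`, which Cramer's rule evaluates to `det B / det G`. Computed in an orthonormal basis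
of `K`, the same trace is `Σ_p ‖P_K Γ e_p‖²`, while `Tr(Γ Γ*) = Σ_p ‖Γ e_p‖² = Σ_n (n+1)|c_n|²`.
Hence the inequality, with equality iff every `Γ e_p` lies in `K`, i.e. iff `range Γ = K`
(`K ⊆ range Γ` always holds, as `c = Γ e₀`), i.e. iff `Γ` has rank `N`.
-/

open Matrix Module

instance Submodule.finiteDimensional_span_range {K V ι : Type*} [DivisionRing K] [AddCommGroup V]
    [Module K V] [Finite ι] (u : ι → V) : FiniteDimensional K (Submodule.span K (Set.range u)) :=
  FiniteDimensional.span_of_finite K (Set.finite_range u)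

section Gram

variable {𝕜 E ι : Type*} [RCLike 𝕜] [NormedAddCommGroup E] [InnerProductSpace 𝕜 E] [Fintype ι]

theorem gram_mulVec_repr_span {u : ι → E} (hu : LinearIndependent 𝕜 u)
    (y : Submodule.span 𝕜 (Set.range u)) :
    gram 𝕜 u *ᵥ (Basis.span hu).repr y = fun i => ⟪u i, (y : E)⟫_𝕜 := by
  ext i
  conv_rhs => rw [← (Basis.span hu).sum_repr y]
  simp [mulVec, dotProduct, inner_sum, inner_smul_right, mul_comm]

theorem repr_span_eq_det_updateCol_div [DecidableEq ι] {u : ι → E}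
    (hu : LinearIndependent 𝕜 u) (y : Submodule.span 𝕜 (Set.range u)) (i : ι) :
    (Basis.span hu).repr y i =
      ((gram 𝕜 u).updateCol i fun j => ⟪u j, (y : E)⟫_𝕜).det / (gram 𝕜 u).det := by
  have hcramer : (gram 𝕜 u).det • (Basis.span hu).repr y =
      cramer (gram 𝕜 u) fun j => ⟪u j, (y : E)⟫_𝕜 := by
    rw [← gram_mulVec_repr_span hu, cramer_eq_adjugate_mulVec, mulVec_mulVec, adjugate_mul,
      smul_mulVec, one_mulVec]
  rw [← cramer_apply, ← hcramer, Pi.smul_apply, smul_eq_mul,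
    mul_div_cancel_left₀ _ (det_gram_ne_zero_iff_linearIndependent.mpr hu)]

end Gram

section Compression

variable {𝕜 E : Type*} [RCLike 𝕜] [NormedAddCommGroup E] [InnerProductSpace 𝕜 E]

def compression (K : Submodule 𝕜 E) [K.HasOrthogonalProjection] (A : E →L[𝕜] E) : K →ₗ[𝕜] K :=
  (K.orthogonalProjectionOnto ∘L A ∘L K.subtypeL).toLinearMap

theorem inner_compression_apply (K : Submodule 𝕜 E) [K.HasOrthogonalProjection] (A : E →L[𝕜] E)
    (x y : K) : ⟪x, compression K A y⟫_𝕜 = ⟪(x : E), A y⟫_𝕜 := by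
  simp [compression]

theorem trace_eq_repr_last_of_shift {n : ℕ} {u : Fin (n + 1) → E} (hu : LinearIndependent 𝕜 u)
    (T : Submodule.span 𝕜 (Set.range u) →ₗ[𝕜] Submodule.span 𝕜 (Set.range u))
    (hT : ∀ k : Fin n, T (Basis.span hu k.castSucc) = Basis.span hu k.succ) :
    LinearMap.trace 𝕜 _ T =
      (Basis.span hu).repr (T (Basis.span hu (Fin.last n))) (Fin.last n) := by
  rw [LinearMap.trace_eq_matrix_trace 𝕜 (Basis.span hu), Matrix.trace, Fin.sum_univ_castSucc]
  have hshift (k : Fin n) :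
      (Basis.span hu).repr (T (Basis.span hu k.castSucc)) k.castSucc = 0 := by
    rw [hT, Basis.repr_self, Finsupp.single_apply, if_neg k.castSucc_lt_succ.ne']
  simp only [Matrix.diag_apply, LinearMap.toMatrix_apply, hshift, Finset.sum_const_zero, zero_add]

def krylov (A : E →L[𝕜] E) (v : E) (N : ℕ) : Fin N → E := fun k => (A ^ (k : ℕ)) v

theorem krylov_succ (A : E →L[𝕜] E) (v : E) {N : ℕ} (k : Fin N) :
    A (krylov A v (N + 1) k.castSucc) = krylov A v (N + 1) k.succ := by
  simp [krylov, pow_succ']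

theorem linearIndependent_krylov {A : E →L[𝕜] E} {v : E} {N : ℕ}
    (h : LinearIndependent 𝕜 fun k : Fin N => (A ^ ((k : ℕ) + 1)) v) :
    LinearIndependent 𝕜 (krylov A v N) := by
  refine LinearIndependent.of_comp A.toLinearMap ?_
  convert h with k
  simp only [krylov, Function.comp_apply, ContinuousLinearMap.coe_coe, pow_succ',
    mul_apply_eq_comp]

theorem trace_compression_krylov (A : E →L[𝕜] E) (v : E) {n : ℕ}
    (hu : LinearIndependent 𝕜 (krylov A v (n + 1))) :
    LinearMap.trace 𝕜 _ (compression (Submodule.span 𝕜 (Set.range (krylov A v (n + 1)))) A) =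
      ((gram 𝕜 (krylov A v (n + 1))).updateCol (Fin.last n)
          fun j => ⟪krylov A v (n + 1) j, (A ^ (n + 1)) v⟫_𝕜).det /
        (gram 𝕜 (krylov A v (n + 1))).det := by
  rw [trace_eq_repr_last_of_shift hu, repr_span_eq_det_updateCol_div]
  · congr
    ext j
    rw [← Basis.coe_span_apply hu, ← Submodule.coe_inner, inner_compression_apply,
      Basis.coe_span_apply, Basis.coe_span_apply]
    simp [krylov, pow_succ']
  · intro k
    ext
    simp only [compression, Basis.coe_span_apply, ContinuousLinearMap.coe_coe,
      ContinuousLinearMap.comp_apply, Submodule.subtypeL_apply, krylov_succ]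
    exact Submodule.starProjection_eq_self_iff.mpr (Submodule.subset_span ⟨_, rfl⟩)

theorem IsSelfAdjoint.inner_pow_apply_pow_apply [CompleteSpace E] {A : E →L[𝕜] E}
    (hA : IsSelfAdjoint A) (k l : ℕ) (v w : E) :
    ⟪(A ^ k) v, (A ^ l) w⟫_𝕜 = ⟪v, (A ^ (k + l)) w⟫_𝕜 := by
  rw [pow_add, mul_apply_eq_comp]
  exact (hA.pow k).isSymmetric v _

theorem gram_krylov_apply [CompleteSpace E] {A : E →L[𝕜] E} (hA : IsSelfAdjoint A) (v : E)
    {N : ℕ} (k l : Fin N) : gram 𝕜 (krylov A v N) k l = ⟪v, (A ^ ((k : ℕ) + l)) v⟫_𝕜 :=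
  hA.inner_pow_apply_pow_apply _ _ v v

end Compression

theorem gramG_eq_gram {A : L2 →L[ℂ] L2} (hA : IsSelfAdjoint A) (v : L2) (N : ℕ) :
    gramG A v N = gram ℂ (krylov A v N) := by
  ext k l
  exact (gram_krylov_apply hA v k l).symm

theorem gramB_eq_updateCol_gram {A : L2 →L[ℂ] L2} (hA : IsSelfAdjoint A) (v : L2) (n : ℕ) :
    gramB A v (n + 1) = (gram ℂ (krylov A v (n + 1))).updateCol (Fin.last n)
      fun j => ⟪krylov A v (n + 1) j, (A ^ (n + 1)) v⟫_ℂ := by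
  ext k l
  by_cases hl : l = Fin.last n
  · simp only [gramB, hl, updateCol_self, krylov, hA.inner_pow_apply_pow_apply, Fin.val_last]
    simp
  · have hl' : (l : ℕ) ≠ n + 1 - 1 := by simpa [Fin.ext_iff] using hl
    simp only [gramB, hl', updateCol_ne hl, gram_krylov_apply hA, if_false]

section Projection

variable {ι 𝕜 E : Type*} [RCLike 𝕜] [NormedAddCommGroup E] [InnerProductSpace 𝕜 E]
  (K : Submodule 𝕜 E) [K.HasOrthogonalProjection] {x : ι → E}

theorem Submodule.sq_norm_orthogonalProjectionOnto_apply_le (y : E) :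
    ‖K.orthogonalProjectionOnto y‖ ^ 2 ≤ ‖y‖ ^ 2 := by
  gcongr
  exact K.norm_orthogonalProjectionOnto_apply_le y

theorem summable_sq_norm_orthogonalProjectionOnto (hx : Summable fun i => ‖x i‖ ^ 2) :
    Summable fun i => ‖K.orthogonalProjectionOnto (x i)‖ ^ 2 :=
  hx.of_nonneg_of_le (fun _ => sq_nonneg _) fun i =>
    K.sq_norm_orthogonalProjectionOnto_apply_le (x i)

theorem tsum_sq_norm_orthogonalProjectionOnto_le (hx : Summable fun i => ‖x i‖ ^ 2) :
    ∑' i, ‖K.orthogonalProjectionOnto (x i)‖ ^ 2 ≤ ∑' i, ‖x i‖ ^ 2 :=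
  (summable_sq_norm_orthogonalProjectionOnto K hx).tsum_le_tsum
    (fun i => K.sq_norm_orthogonalProjectionOnto_apply_le (x i)) hx

theorem tsum_sq_norm_orthogonalProjectionOnto_eq_iff (hx : Summable fun i => ‖x i‖ ^ 2) :
    ∑' i, ‖K.orthogonalProjectionOnto (x i)‖ ^ 2 = ∑' i, ‖x i‖ ^ 2 ↔ ∀ i, x i ∈ K := by
  refine ⟨fun h i => ?_, fun h => tsum_congr fun i => by
    rw [K.norm_orthogonalProjectionOnto_apply (h i)]⟩
  by_contra hi
  have hlt : ‖K.orthogonalProjectionOnto (x i)‖ ^ 2 < ‖x i‖ ^ 2 := by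
    refine pow_lt_pow_left₀ (lt_of_le_of_ne (K.norm_orthogonalProjectionOnto_apply_le _) ?_)
      (norm_nonneg _) two_ne_zero
    rwa [K.mem_iff_norm_starProjection] at hi
  exact h.not_lt ((summable_sq_norm_orthogonalProjectionOnto K hx).tsum_lt_tsum
    (fun i => K.sq_norm_orthogonalProjectionOnto_apply_le (x i)) hlt hx)

end Projection

theorem lp.hasSum_sq_norm {ι : Type*} {G : ι → Type*} [∀ i, NormedAddCommGroup (G i)]
    (x : lp G 2) : HasSum (fun i => ‖x i‖ ^ 2) (‖x‖ ^ 2) := by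
  have h := lp.hasSum_norm (p := 2) (by norm_num) x
  simp only [ENNReal.toReal_ofNat, Real.rpow_two] at h
  exact h

section HilbertSchmidt

variable {E : Type*} [NormedAddCommGroup E] [InnerProductSpace ℂ E]

theorem range_le_of_apply_single_mem (T : L2 →L[ℂ] E) {K : Submodule ℂ E}
    (hK : IsClosed (K : Set E)) (h : ∀ p, T (lp.single 2 p 1) ∈ K) :
    LinearMap.range (T : L2 →ₗ[ℂ] E) ≤ K := by
  rintro _ ⟨x, rfl⟩
  refine hK.mem_of_tendsto ((lp.hasSum_single ENNReal.ofNat_ne_top x).mapL T)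
    (Filter.Eventually.of_forall fun s => K.sum_mem fun p _ => ?_)
  rw [← mul_one (x p), ← smul_eq_mul, lp.single_smul, map_smul]
  exact K.smul_mem _ (h p)

variable [CompleteSpace E]

theorem ContinuousLinearMap.adjoint_apply_eq_inner_single (T : L2 →L[ℂ] E) (x : E) (p : ℕ) :
    (adjoint T x : ℕ → ℂ) p = ⟪T (lp.single 2 p 1), x⟫_ℂ := by
  rw [← adjoint_inner_right, lp.inner_single_left]
  simp

theorem ContinuousLinearMap.hasSum_sq_norm_inner_apply_single (T : L2 →L[ℂ] E) (x : E) :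
    HasSum (fun p => ‖⟪T (lp.single 2 p 1), x⟫_ℂ‖ ^ 2) (‖adjoint T x‖ ^ 2) := by
  simpa only [adjoint_apply_eq_inner_single] using lp.hasSum_sq_norm (adjoint T x)

theorem trace_compression_comp_adjoint (T : L2 →L[ℂ] E) (K : Submodule ℂ E)
    [FiniteDimensional ℂ K] :
    LinearMap.trace ℂ K (compression K (T ∘L ContinuousLinearMap.adjoint T)) =
      ((∑' p, ‖K.orthogonalProjectionOnto (T (lp.single 2 p 1))‖ ^ 2 : ℝ) : ℂ) := by
  set b := stdOrthonormalBasis ℂ K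
  have hb (j) : ⟪b j, compression K (T ∘L ContinuousLinearMap.adjoint T) (b j)⟫_ℂ =
      ((∑' p, ‖⟪K.orthogonalProjectionOnto (T (lp.single 2 p 1)), b j⟫_ℂ‖ ^ 2 : ℝ) : ℂ) := by
    rw [inner_compression_apply, ContinuousLinearMap.comp_apply,
      ← ContinuousLinearMap.adjoint_inner_left, inner_self_eq_norm_sq_to_K]
    simp only [Submodule.inner_orthogonalProjectionOnto_eq_of_mem_right]
    exact_mod_cast congrArg _ (T.hasSum_sq_norm_inner_apply_single (b j : E)).tsum_eq.symm
  rw [LinearMap.trace_eq_sum_inner _ b, Finset.sum_congr rfl fun j _ => hb j,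
    ← Complex.ofReal_sum, ← Summable.tsum_finsetSum fun j _ => ?_]
  · simp only [OrthonormalBasis.sum_sq_norm_inner_left]
  · simpa only [Submodule.inner_orthogonalProjectionOnto_eq_of_mem_right] using
      (T.hasSum_sq_norm_inner_apply_single (b j : E)).summable

end HilbertSchmidt

open Finset in
theorem hasSum_tsum_add_right {g : ℕ → ℝ} (hg : 0 ≤ g)
    (h : Summable fun m : ℕ => ((m : ℝ) + 1) * g m) :
    HasSum (fun p => ∑' n, g (n + p)) (∑' m : ℕ, ((m : ℝ) + 1) * g m) := by
  have hfiber (m : ℕ) : ∑' x : antidiagonal m, g (x.1.2 + x.1.1) = ((m : ℝ) + 1) * g m := by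
    rw [tsum_subtype (antidiagonal m) fun x => g (x.2 + x.1),
      sum_congr rfl fun x hx => by rw [add_comm, mem_antidiagonal.mp hx],
      sum_const, Nat.card_antidiagonal, nsmul_eq_mul]
    push_cast
    ring
  have hsigma : Summable fun x : Σ m, antidiagonal m => g (x.2.1.2 + x.2.1.1) := by
    rw [summable_sigma_of_nonneg fun _ => hg _]
    exact ⟨fun m => Summable.of_finite, by simpa only [hfiber] using h⟩
  have hprod : HasSum (fun x : ℕ × ℕ => g (x.2 + x.1)) (∑' m : ℕ, ((m : ℝ) + 1) * g m) := by
    rw [← HasAntidiagonal.sigmaAntidiagonalEquivProd.hasSum_iff]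
    convert hsigma.hasSum using 1
    · rfl
    · rw [hsigma.tsum_sigma]
      exact tsum_congr fun m => (hfiber m).symm
  exact hprod.prod_fiberwise fun p => (hprod.summable.prod_factor p).hasSum

section Hankel

variable {c : ℕ → ℂ} {Γ : L2 →L[ℂ] L2}

theorem IsHankelOp.apply_single (hΓ : IsHankelOp c Γ) (p n : ℕ) :
    (Γ (lp.single 2 p 1) : ℕ → ℂ) n = c (n + p) := by
  rw [hΓ, tsum_eq_single p fun q hq => by rw [lp.single_apply_ne 2 p _ hq, mul_zero],
    lp.single_apply_self, mul_one]

theorem IsHankelOp.apply_single_zero (hΓ : IsHankelOp c Γ) (hc : Memℓp c 2) :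
    Γ (lp.single 2 0 1) = ⟨c, hc⟩ :=
  lp.ext <| funext fun n => hΓ.apply_single 0 n

theorem IsHankelOp.hasSum_sq_norm_apply_single (hΓ : IsHankelOp c Γ) (hc : InH12 c) :
    HasSum (fun p => ‖Γ (lp.single 2 p 1)‖ ^ 2) (∑' n : ℕ, ((n : ℝ) + 1) * ‖c n‖ ^ 2) := by
  have hcol (p : ℕ) : ‖Γ (lp.single 2 p 1)‖ ^ 2 = ∑' n, ‖c (n + p)‖ ^ 2 := by
    simp only [← (lp.hasSum_sq_norm (Γ (lp.single 2 p 1))).tsum_eq, hΓ.apply_single]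
  simp only [hcol]
  refine hasSum_tsum_add_right (fun _ => sq_nonneg _) ?_
  exact (hc.2.add (summable_sq_of_memℓp hc.1)).congr fun n => by ring

end Hankel

theorem Submodule.le_iff_rank_eq_finrank_of_le {𝕜 V : Type*} [DivisionRing 𝕜] [AddCommGroup V]
    [Module 𝕜 V] {K R : Submodule 𝕜 V} [FiniteDimensional 𝕜 K] (h : K ≤ R) :
    R ≤ K ↔ Module.rank 𝕜 R = finrank 𝕜 K := by
  refine ⟨fun hRK => by rw [le_antisymm hRK h, finrank_eq_rank], fun hR => ?_⟩
  have : FiniteDimensional 𝕜 R := rank_lt_aleph0_iff.mp (hR ▸ Cardinal.natCast_lt_aleph0)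
  exact (Submodule.eq_of_le_of_finrank_eq h (finrank_eq_of_rank_eq hR).symm).ge

theorem pow_comp_apply_mem_range {R M N : Type*} [Semiring R] [AddCommMonoid M]
    [AddCommMonoid N] [Module R M] [Module R N] [TopologicalSpace M] [TopologicalSpace N]
    (Γ : M →L[R] N) (S : N →L[R] M) {v : N} (hv : v ∈ LinearMap.range (Γ : M →ₗ[R] N)) :
    ∀ k : ℕ, ((Γ ∘L S) ^ k) v ∈ LinearMap.range (Γ : M →ₗ[R] N)
  | 0 => hv
  | k + 1 => by rw [pow_succ', mul_apply_eq_comp]; exact ⟨S _, rfl⟩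

/-- If `A = Γ_cΓ_c*` and `Ac, A²c, …, A^N c` are linearly independent, then `det G ≠ 0`,
the quotient `det B / det G` is real, and `Tr(Γ_cΓ_c*) = Σ (n+1)|c_n|² ≥ det B / det G`,
with equality if and only if `Γ_c` has rank `N`. -/
theorem statement14 (N : ℕ) (hN : 1 ≤ N) (c : ℕ → ℂ) (hc : InH12 c)
    (Γ : L2 →L[ℂ] L2) (hΓ : IsHankelOp c Γ)
    (hind : LinearIndependent ℂ
      (fun k : Fin N => ((opT Γ) ^ ((k : ℕ) + 1)) (⟨c, hc.1⟩ : L2))) :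
    (gramG (opT Γ) (⟨c, hc.1⟩ : L2) N).det ≠ 0 ∧
    ((gramB (opT Γ) (⟨c, hc.1⟩ : L2) N).det /
        (gramG (opT Γ) (⟨c, hc.1⟩ : L2) N).det).im = 0 ∧
    ((gramB (opT Γ) (⟨c, hc.1⟩ : L2) N).det /
        (gramG (opT Γ) (⟨c, hc.1⟩ : L2) N).det).re
      ≤ ∑' n : ℕ, ((n : ℝ) + 1) * ‖c n‖ ^ 2 ∧
    ((∑' n : ℕ, ((n : ℝ) + 1) * ‖c n‖ ^ 2) =
        ((gramB (opT Γ) (⟨c, hc.1⟩ : L2) N).det /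
          (gramG (opT Γ) (⟨c, hc.1⟩ : L2) N).det).re ↔
      LinearMap.rank Γ.toLinearMap = N) := by
  obtain ⟨n, rfl⟩ : ∃ n, N = n + 1 := ⟨N - 1, by omega⟩
  set v : L2 := ⟨c, hc.1⟩
  have hA : IsSelfAdjoint (opT Γ) := IsSelfAdjoint.mul_star_self Γ
  have hu := linearIndependent_krylov hind
  set K := Submodule.span ℂ (Set.range (krylov (opT Γ) v (n + 1)))
  have hτ : (gramB (opT Γ) v (n + 1)).det / (gramG (opT Γ) v (n + 1)).det =
      ((∑' p, ‖K.orthogonalProjectionOnto (Γ (lp.single 2 p 1))‖ ^ 2 : ℝ) : ℂ) := by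
    rw [gramG_eq_gram hA, gramB_eq_updateCol_gram hA, ← trace_compression_krylov _ _ hu]
    exact trace_compression_comp_adjoint Γ K
  have hHS := hΓ.hasSum_sq_norm_apply_single hc
  have hK : K ≤ LinearMap.range Γ.toLinearMap := Submodule.span_le.mpr <|
    Set.range_subset_iff.mpr fun k => pow_comp_apply_mem_range Γ _ ⟨_, hΓ.apply_single_zero hc.1⟩ k
  have hrank : (∀ p, Γ (lp.single 2 p 1) ∈ K) ↔ LinearMap.rank Γ.toLinearMap = (n + 1 : ℕ) := by
    rw [LinearMap.rank, ← Fintype.card_fin (n + 1), ← finrank_span_eq_card hu,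
      ← Submodule.le_iff_rank_eq_finrank_of_le hK]
    exact ⟨range_le_of_apply_single_mem Γ K.closed_of_finiteDimensional, fun h p => h ⟨_, rfl⟩⟩
  refine ⟨gramG_eq_gram hA v _ ▸ det_gram_ne_zero_iff_linearIndependent.mpr hu, ?_, ?_, ?_⟩
  · rw [hτ, Complex.ofReal_im]
  · rw [hτ, Complex.ofReal_re, ← hHS.tsum_eq]
    exact tsum_sq_norm_orthogonalProjectionOnto_le K hHS.summable
  · rw [hτ, Complex.ofReal_re, ← hHS.tsum_eq, eq_comm,
      tsum_sq_norm_orthogonalProjectionOnto_eq_iff K hHS.summable, hrank]
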